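/- arXiv:math/0301235 — 4 statements merged into one kernel-verified Lean document; each statement's English description precedes it below -/
import Mathlib

section
/- Let A, B be invertible 2×2 real matrices with BA having distinct singular values E < F. Let e^(k) be the most contracted unit vector of A and write e^(k) = cos(φ) e^(k+1) + sin(φ) f^(k+1) in the orthonormal basis of most contracted/expanded vectors of BA. Then tan²(φ) = (‖BA e^(k)‖² − E²)/(F² − ‖BA e^(k)‖²), provided ‖BA e^(k)‖ < F. -/
open scoped RealInnerProductSpace

lemma norm_comb_sq (u v : EuclideanSpace ℝ (Fin 2)) (a b : ℝ) :
    ‖a • u + b • v‖ ^ 2 = a ^ 2 * ‖u‖ ^ 2 + 2 * a * b * ⟪u, v⟫ + b ^ 2 * ‖v‖ ^ 2 := by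
  rw [norm_add_sq_real, norm_smul, norm_smul, real_inner_smul_left, real_inner_smul_right]
  simp only [Real.norm_eq_abs, mul_pow, sq_abs]
  ring

set_option maxHeartbeats 1600000 in
/-- Let `A`, `B` be invertible 2×2 real matrices with `BA`
having distinct singular values `E < F` (`E = ‖(BA)⁻¹‖⁻¹`, `F = ‖BA‖`).  Let
`e⁽ᵏ⁾` be the most contracted unit vector of `A`, written as
`e⁽ᵏ⁾ = cos(φ) e⁽ᵏ⁺¹⁾ + sin(φ) f⁽ᵏ⁺¹⁾` in the orthonormal basis of most
contracted / most expanded vectors of `BA`.  If `‖BA e⁽ᵏ⁾‖ < F` then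
`tan²(φ) = (‖BA e⁽ᵏ⁾‖² − E²)/(F² − ‖BA e⁽ᵏ⁾‖²)`. -/
theorem stmt5 (A B : Matrix (Fin 2) (Fin 2) ℝ) (hA : IsUnit A.det) (hB : IsUnit B.det)
    (TA TBA : EuclideanSpace ℝ (Fin 2) →L[ℝ] EuclideanSpace ℝ (Fin 2))
    (hTA : TA = Matrix.toEuclideanCLM (𝕜 := ℝ) A)
    (hTBA : TBA = Matrix.toEuclideanCLM (𝕜 := ℝ) (B * A))
    (E F : ℝ) (hE : E = ‖Matrix.toEuclideanCLM (𝕜 := ℝ) (B * A)⁻¹‖⁻¹) (hF : F = ‖TBA‖)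
    (hEF : E < F)
    (ek ek1 fk1 : EuclideanSpace ℝ (Fin 2))
    (hek : ‖ek‖ = 1) (hekmin : ‖TA ek‖ = ‖Matrix.toEuclideanCLM (𝕜 := ℝ) A⁻¹‖⁻¹)
    (hek1 : ‖ek1‖ = 1) (hek1min : ‖TBA ek1‖ = E)
    (hfk1 : ‖fk1‖ = 1) (hfk1max : ‖TBA fk1‖ = F)
    (horth : ⟪ek1, fk1⟫ = 0)
    (φ : ℝ) (hdecomp : ek = Real.cos φ • ek1 + Real.sin φ • fk1)
    (hlt : ‖TBA ek‖ < F) :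
    Real.tan φ ^ 2 = (‖TBA ek‖ ^ 2 - E ^ 2) / (F ^ 2 - ‖TBA ek‖ ^ 2) := by
  set S := Matrix.toEuclideanCLM (𝕜 := ℝ) (B * A)⁻¹ with hS
  have hdet : IsUnit (B * A).det := by rw [Matrix.det_mul]; exact hB.mul hA
  have hST : S * TBA = 1 := by
    rw [hS, hTBA, ← map_mul, Matrix.nonsing_inv_mul _ hdet, map_one]
  have hid : ∀ x, S (TBA x) = x := by
    intro x
    have := congrArg (fun f => f x) hST
    simpa using this
  have hE0 : 0 ≤ E := by rw [hE]; positivity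
  have hF0 : 0 < F := lt_of_le_of_lt hE0 hEF
  have hSpos : 0 < ‖S‖ := by
    have h1 : ‖ek‖ ≤ ‖S‖ * ‖TBA ek‖ := by
      conv_lhs => rw [← hid ek]
      exact S.le_opNorm _
    rw [hek] at h1
    nlinarith [norm_nonneg (TBA ek), norm_nonneg S]
  have hlow : ∀ x : EuclideanSpace ℝ (Fin 2), E * ‖x‖ ≤ ‖TBA x‖ := by
    intro x
    have h1 : ‖x‖ ≤ ‖S‖ * ‖TBA x‖ := by
      conv_lhs => rw [← hid x]
      exact S.le_opNorm _
    rw [hE]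
    calc ‖S‖⁻¹ * ‖x‖ ≤ ‖S‖⁻¹ * (‖S‖ * ‖TBA x‖) := by
            apply mul_le_mul_of_nonneg_left h1 (by positivity)
      _ = ‖TBA x‖ := by field_simp
  -- orthogonality of images
  set c := ⟪TBA ek1, TBA fk1⟫ with hc
  have hkey : ∀ s : ℝ, 0 ≤ (F ^ 2 - E ^ 2) * s ^ 2 + 2 * c * s := by
    intro s
    have himg : TBA (ek1 + s • fk1) = (1:ℝ) • TBA ek1 + s • TBA fk1 := by
      simp [map_add, map_smul]
    have h1 : ‖TBA (ek1 + s • fk1)‖ ^ 2 =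
        E ^ 2 + 2 * s * c + s ^ 2 * F ^ 2 := by
      rw [himg, norm_comb_sq, hek1min, hfk1max]
      ring
    have h2 : ‖(ek1 + s • fk1 : EuclideanSpace ℝ (Fin 2))‖ ^ 2 = 1 + s ^ 2 := by
      have : (ek1 + s • fk1 : EuclideanSpace ℝ (Fin 2)) = (1:ℝ) • ek1 + s • fk1 := by
        simp
      rw [this, norm_comb_sq, hek1, hfk1, horth]
      ring
    have h3 := hlow (ek1 + s • fk1)
    have h4 : (E * ‖(ek1 + s • fk1 : EuclideanSpace ℝ (Fin 2))‖) ^ 2 ≤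
        ‖TBA (ek1 + s • fk1)‖ ^ 2 := by
      apply sq_le_sq' _ h3
      exact le_trans (neg_nonpos_of_nonneg (norm_nonneg _))
        (mul_nonneg hE0 (norm_nonneg _))
    rw [mul_pow, h2, h1] at h4
    nlinarith
  have hc0 : c = 0 := by
    clear_value c
    clear * - hkey hEF hE0
    have hFE : 0 < F ^ 2 - E ^ 2 := by nlinarith
    have h := hkey (-c / (F ^ 2 - E ^ 2))
    have heq : (F ^ 2 - E ^ 2) * (-c / (F ^ 2 - E ^ 2)) ^ 2 +
        2 * c * (-c / (F ^ 2 - E ^ 2)) = -(c ^ 2 / (F ^ 2 - E ^ 2)) := by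
      field_simp
      ring
    rw [heq] at h
    have h2 : c ^ 2 / (F ^ 2 - E ^ 2) ≤ 0 := by linarith
    have h3 : 0 ≤ c ^ 2 / (F ^ 2 - E ^ 2) := div_nonneg (sq_nonneg c) hFE.le
    have h4 : c ^ 2 / (F ^ 2 - E ^ 2) = 0 := le_antisymm h2 h3
    have h5 : c ^ 2 = 0 := by
      rcases (div_eq_zero_iff).mp h4 with h | h
      · exact h
      · exact absurd h (ne_of_gt hFE)
    exact pow_eq_zero_iff (by norm_num) |>.mp h5
  -- norm of TBA ek
  have hN : ‖TBA ek‖ ^ 2 = Real.cos φ ^ 2 * E ^ 2 + Real.sin φ ^ 2 * F ^ 2 := by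
    have himg : TBA ek = Real.cos φ • TBA ek1 + Real.sin φ • TBA fk1 := by
      rw [hdecomp]; simp [map_add, map_smul]
    rw [himg, norm_comb_sq, hek1min, hfk1max, ← hc, hc0]
    ring
  have hNnn : (0:ℝ) ≤ ‖TBA ek‖ := norm_nonneg _
  clear * - hN hNnn hlt hEF hE0 hF0
  have hN2 : ‖TBA ek‖ ^ 2 < F ^ 2 := by
    nlinarith [norm_nonneg (TBA ek)]
  have hcos : Real.cos φ ^ 2 ≠ 0 := by
    intro h
    have hsin : Real.sin φ ^ 2 = 1 := by
      have := Real.sin_sq_add_cos_sq φ; nlinarith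
    rw [h, hsin] at hN
    nlinarith
  have htan : Real.tan φ ^ 2 = Real.sin φ ^ 2 / Real.cos φ ^ 2 := by
    rw [Real.tan_eq_sin_div_cos, div_pow]
  rw [htan, hN]
  have hpyth := Real.sin_sq_add_cos_sq φ
  have hcospos : 0 < Real.cos φ ^ 2 := lt_of_le_of_ne (sq_nonneg _) (Ne.symm hcos)
  have hFE : 0 < F ^ 2 - E ^ 2 := by nlinarith
  have hden : F ^ 2 - (Real.cos φ ^ 2 * E ^ 2 + Real.sin φ ^ 2 * F ^ 2) = Real.cos φ ^ 2 * (F ^ 2 - E ^ 2) := by linear_combination (-(F ^ 2)) * hpyth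
  have hnum : Real.cos φ ^ 2 * E ^ 2 + Real.sin φ ^ 2 * F ^ 2 - E ^ 2 = Real.sin φ ^ 2 * (F ^ 2 - E ^ 2) := by linear_combination E ^ 2 * hpyth
  rw [hden, hnum, mul_div_mul_right _ _ (ne_of_gt hFE)]
end

section
/- Let A, B be invertible 2×2 real matrices with BA having distinct singular values E < F, and suppose ‖BA e^(k)‖ ≤ F/2, where e^(k) is the most contracted unit vector of A. Then the angle φ between e^(k) and the most contracted unit vector of BA satisfies |tan φ| ≤ (2/√3)·‖BA e^(k)‖/F. -/
open scoped RealInnerProductSpace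

private lemma quad_zero (c K : ℝ) (hK : 0 ≤ K) (h : ∀ t : ℝ, 0 ≤ 2*t*c + t^2*K) : c = 0 := by
  by_contra hne
  have hK1 : 0 < K + 1 := by linarith
  have hc2 : 0 < c^2 := by positivity
  have hprod : 0 < (K + 1)^2 := by positivity
  have h1 := h (-c / (K + 1))
  have heq : 2*(-c/(K+1))*c + (-c/(K+1))^2 * K = (-(c^2*(K+2)))/(K+1)^2 := by
    field_simp
    ring
  rw [heq, le_div_iff₀ hprod, zero_mul] at h1
  nlinarith [mul_nonneg hc2.le hK]

private lemma sqrt_of_sq (x : ℝ) (hx : 0 ≤ x) (h : x^2 = 1) : x = 1 := by nlinarith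

set_option maxHeartbeats 2000000 in
/-- Let `A`, `B` be invertible 2×2 real matrices with `BA`
having distinct singular values `E < F` (`E = ‖(BA)⁻¹‖⁻¹`, `F = ‖BA‖`).  Let
`e⁽ᵏ⁾` be the most contracted unit vector of `A` and `e⁽ᵏ⁺¹⁾` that of `BA`,
and let `φ ∈ [0, π/2]` be the angle between them, `cos φ = |⟪e⁽ᵏ⁾, e⁽ᵏ⁺¹⁾⟫|`.
If `‖BA e⁽ᵏ⁾‖ ≤ F/2` then `|tan φ| ≤ (2/√3) · ‖BA e⁽ᵏ⁾‖ / F`. -/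
theorem stmt6 (A B : Matrix (Fin 2) (Fin 2) ℝ) (hA : IsUnit A.det) (hB : IsUnit B.det)
    (TA TBA : EuclideanSpace ℝ (Fin 2) →L[ℝ] EuclideanSpace ℝ (Fin 2))
    (hTA : TA = Matrix.toEuclideanCLM (𝕜 := ℝ) A)
    (hTBA : TBA = Matrix.toEuclideanCLM (𝕜 := ℝ) (B * A))
    (E F : ℝ) (hE : E = ‖Matrix.toEuclideanCLM (𝕜 := ℝ) (B * A)⁻¹‖⁻¹) (hF : F = ‖TBA‖)
    (hEF : E < F)
    (ek ek1 : EuclideanSpace ℝ (Fin 2))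
    (hek : ‖ek‖ = 1) (hekmin : ‖TA ek‖ = ‖Matrix.toEuclideanCLM (𝕜 := ℝ) A⁻¹‖⁻¹)
    (hek1 : ‖ek1‖ = 1) (hek1min : ‖TBA ek1‖ = E)
    (φ : ℝ) (hφ0 : 0 ≤ φ) (hφ1 : φ ≤ Real.pi / 2)
    (hφcos : Real.cos φ = |⟪ek, ek1⟫|)
    (hhalf : ‖TBA ek‖ ≤ F / 2) :
    |Real.tan φ| ≤ (2 / Real.sqrt 3) * ‖TBA ek‖ / F := by
  have hE0 : 0 ≤ E := hE ▸ inv_nonneg.2 (norm_nonneg _)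
  have hF0 : 0 < F := lt_of_le_of_lt hE0 hEF
  -- inverse operator
  have hdetBA : IsUnit (B * A).det := by rw [Matrix.det_mul]; exact hB.mul hA
  set Minv := Matrix.toEuclideanCLM (𝕜 := ℝ) (B * A)⁻¹ with hMinvdef
  have hinvcomp : Minv * TBA = 1 := by
    rw [hTBA, hMinvdef, ← map_mul, Matrix.nonsing_inv_mul _ hdetBA, map_one]
  have hinv : ∀ v : EuclideanSpace ℝ (Fin 2), Minv (TBA v) = v := by
    intro v
    calc Minv (TBA v) = (Minv * TBA) v := rfl
      _ = v := by rw [hinvcomp]; rfl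
  have hm0 : 0 < ‖Minv‖ := by
    rcases eq_or_lt_of_le (norm_nonneg Minv) with h | h
    · exfalso
      have h0 : Minv = 0 := by rwa [eq_comm, norm_eq_zero] at h
      have hv := hinv ek1
      rw [h0] at hv
      simp at hv
      rw [← hv] at hek1
      simp at hek1
    · exact h
  -- lower bound E‖v‖ ≤ ‖TBA v‖
  have hML : ∀ v : EuclideanSpace ℝ (Fin 2), E * ‖v‖ ≤ ‖TBA v‖ := by
    intro v
    have h1 : ‖v‖ ≤ ‖Minv‖ * ‖TBA v‖ := by
      calc ‖v‖ = ‖Minv (TBA v)‖ := by rw [hinv]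
        _ ≤ ‖Minv‖ * ‖TBA v‖ := Minv.le_opNorm _
    rw [hE, inv_mul_le_iff₀ hm0]
    exact h1
  have hMU : ∀ v : EuclideanSpace ℝ (Fin 2), ‖TBA v‖ ≤ F * ‖v‖ := by
    intro v; rw [hF]; exact TBA.le_opNorm v
  -- coordinates of ek1
  have hsq : ∀ x : EuclideanSpace ℝ (Fin 2), ‖x‖^2 = x 0 ^2 + x 1 ^2 := by
    intro x
    rw [EuclideanSpace.norm_eq, Real.sq_sqrt (by positivity)]
    simp [Fin.sum_univ_two, sq_abs]
  have hab : (ek1 0)^2 + (ek1 1)^2 = 1 := by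
    have h := hsq ek1; rw [hek1] at h; simpa using h.symm
  -- orthogonal unit vector
  set w : EuclideanSpace ℝ (Fin 2) := !₂[-(ek1 1), ek1 0] with hwdef
  have hw0 : w 0 = -(ek1 1) := rfl
  have hw1c : w 1 = ek1 0 := rfl
  have hinner : ∀ x y : EuclideanSpace ℝ (Fin 2), ⟪x, y⟫ = x 0 * y 0 + x 1 * y 1 := by
    intro x y; simp [PiLp.inner_apply, RCLike.inner_apply, Fin.sum_univ_two, mul_comm]
  have hw1 : ‖w‖ = 1 := by
    apply sqrt_of_sq _ (norm_nonneg w)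
    rw [hsq w, hw0, hw1c]
    linear_combination hab
  have hortho : ⟪ek1, w⟫ = 0 := by rw [hinner, hw0, hw1c]; ring
  -- decomposition of arbitrary vectors
  have hadd : ∀ (x y : EuclideanSpace ℝ (Fin 2)) (j : Fin 2), (x + y) j = x j + y j :=
    fun _ _ _ => rfl
  have hsmul : ∀ (r : ℝ) (x : EuclideanSpace ℝ (Fin 2)) (j : Fin 2), (r • x) j = r * x j :=
    fun _ _ _ => rfl
  have hdecomp : ∀ v : EuclideanSpace ℝ (Fin 2), v = ⟪v, ek1⟫ • ek1 + ⟪v, w⟫ • w := by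
    intro v
    ext i
    fin_cases i <;> simp only [Fin.zero_eta, Fin.mk_one] <;>
      rw [hadd, hsmul, hsmul, hinner, hinner, hw0, hw1c]
    · linear_combination (-(v 0)) * hab
    · linear_combination (-(v 1)) * hab
  -- expansion of norms squared
  have hexp : ∀ (s t : ℝ), ‖s • ek1 + t • w‖^2 = s^2 + t^2 := by
    intro s t
    rw [norm_add_sq_real, inner_smul_left, inner_smul_right, hortho, norm_smul, norm_smul]
    simp only [mul_pow, Real.norm_eq_abs, sq_abs, mul_zero, RCLike.conj_to_real]
    rw [hek1, hw1]
    ring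
  have hpyth : ∀ v : EuclideanSpace ℝ (Fin 2), ⟪v, ek1⟫^2 + ⟪v, w⟫^2 = ‖v‖^2 := by
    intro v
    conv_rhs => rw [hdecomp v]
    rw [hexp]
  -- orthogonality of images
  set c := ⟪TBA ek1, TBA w⟫ with hc
  set W := ‖TBA w‖ with hW
  have hW0 : 0 ≤ W := norm_nonneg _
  have hWE : E ≤ W := by
    have h := hML w; rwa [hw1, mul_one] at h
  have hWF : W ≤ F := by
    have h := hMU w; rwa [hw1, mul_one] at h
  have hTexp : ∀ (s t : ℝ), ‖TBA (s • ek1 + t • w)‖^2 = s^2 * E^2 + 2*s*t*c + t^2 * W^2 := by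
    intro s t
    rw [map_add, map_smul, map_smul, norm_add_sq_real, inner_smul_left, inner_smul_right,
      norm_smul, norm_smul]
    simp only [mul_pow, Real.norm_eq_abs, sq_abs, RCLike.conj_to_real]
    rw [hek1min, ← hc, ← hW]
    ring
  have hK : 0 ≤ W^2 - E^2 := by nlinarith only [hWE, hE0]
  have hkey : ∀ t : ℝ, 0 ≤ 2*t*c + t^2 * (W^2 - E^2) := by
    intro t
    have h1 := hML (ek1 + t • w)
    have h2 : ‖ek1 + (t:ℝ) • w‖^2 = 1 + t^2 := by
      have h := hexp 1 t; rw [one_smul] at h; rw [h]; ring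
    have h3 : ‖TBA (ek1 + t • w)‖^2 = E^2 + 2*t*c + t^2 * W^2 := by
      have h := hTexp 1 t; rw [one_smul] at h; rw [h]; ring
    have h4 : (E * ‖ek1 + t • w‖)^2 ≤ ‖TBA (ek1 + t • w)‖^2 := by
      apply sq_le_sq' _ h1
      have hnn : 0 ≤ E * ‖ek1 + t • w‖ := mul_nonneg hE0 (norm_nonneg _)
      linarith only [hnn, norm_nonneg (TBA (ek1 + t • w))]
    rw [mul_pow, h2, h3] at h4
    nlinarith only [h4]
  have hc0 : c = 0 := quad_zero c (W^2 - E^2) hK hkey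
  -- norm-squared formula
  have hnormsq : ∀ v : EuclideanSpace ℝ (Fin 2),
      ‖TBA v‖^2 = ⟪v, ek1⟫^2 * E^2 + ⟪v, w⟫^2 * W^2 := by
    intro v
    conv_lhs => rw [hdecomp v]
    rw [hTexp, hc0]
    ring
  -- W = F
  have hWFeq : W = F := by
    have hbd : ‖TBA‖ ≤ max E W := by
      apply ContinuousLinearMap.opNorm_le_bound _ (le_max_of_le_left hE0)
      intro v
      have hme : E ≤ max E W := le_max_left _ _
      have hmw : W ≤ max E W := le_max_right _ _
      have hm0' : 0 ≤ max E W := le_trans hE0 hme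
      have h1 : E^2 * ⟪v, ek1⟫^2 ≤ (max E W)^2 * ⟪v, ek1⟫^2 :=
        mul_le_mul_of_nonneg_right (pow_le_pow_left₀ hE0 hme 2) (sq_nonneg _)
      have h2 : W^2 * ⟪v, w⟫^2 ≤ (max E W)^2 * ⟪v, w⟫^2 :=
        mul_le_mul_of_nonneg_right (pow_le_pow_left₀ hW0 hmw 2) (sq_nonneg _)
      have h3 : (max E W)^2 * (⟪v, ek1⟫^2 + ⟪v, w⟫^2) = (max E W)^2 * ‖v‖^2 := by
        rw [hpyth]
      have hsqle : ‖TBA v‖^2 ≤ (max E W * ‖v‖)^2 := by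
        rw [hnormsq v, mul_pow]
        nlinarith only [h1, h2, h3]
      have h := Real.sqrt_le_sqrt hsqle
      rwa [Real.sqrt_sq (norm_nonneg _), Real.sqrt_sq (by positivity)] at h
    have hFle : F ≤ max E W := hF ▸ hbd
    rcases max_cases E W with ⟨heq, _⟩ | ⟨heq, _⟩
    · rw [heq] at hFle; linarith only [hFle, hEF]
    · rw [heq] at hFle; linarith only [hFle, hWF]
  -- final computation
  set α := ⟪ek, ek1⟫ with hα
  set β := ⟪ek, w⟫ with hβ
  set N := ‖TBA ek‖ with hN
  have hN0 : 0 ≤ N := norm_nonneg _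
  have hN2 : N^2 = α^2 * E^2 + β^2 * F^2 := by rw [hN, hnormsq ek, hWFeq]
  have hαβ : α^2 + β^2 = 1 := by rw [hα, hβ, hpyth ek, hek]; norm_num
  have hβF : β^2 * F^2 ≤ N^2 := by
    nlinarith only [hN2, mul_nonneg (sq_nonneg α) (sq_nonneg E)]
  have hNsq : N^2 ≤ F^2/4 := by nlinarith only [hN0, hhalf, hF0]
  have hβ14 : β^2 ≤ 1/4 := by nlinarith only [hβF, hNsq, mul_pos hF0 hF0]
  have hα34 : 3/4 ≤ α^2 := by linarith only [hαβ, hβ14]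
  -- trigonometry
  have hαne : α ≠ 0 := by
    intro h0; rw [h0] at hα34; norm_num at hα34
  have hcos0 : 0 < Real.cos φ := by rw [hφcos]; exact abs_pos.2 hαne
  have hsin0 : 0 ≤ Real.sin φ :=
    Real.sin_nonneg_of_nonneg_of_le_pi hφ0
      (le_trans hφ1 (by linarith only [Real.pi_pos]))
  have hcossq : Real.cos φ ^ 2 = α^2 := by rw [hφcos, sq_abs]
  have hsinsq : Real.sin φ ^ 2 = β^2 := by
    have h := Real.sin_sq_add_cos_sq φ
    rw [hcossq] at h; linarith only [h, hαβ]
  set T := Real.tan φ with hT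
  have hT0 : 0 ≤ T := by
    rw [hT, Real.tan_eq_sin_div_cos]; exact div_nonneg hsin0 hcos0.le
  have hTcos : T * Real.cos φ = Real.sin φ := by
    rw [hT, Real.tan_eq_sin_div_cos]; field_simp
  have hT2 : T^2 * α^2 = β^2 := by
    have h : (T * Real.cos φ)^2 = Real.sin φ ^2 := by rw [hTcos]
    rw [mul_pow, hcossq, hsinsq] at h
    exact h
  have h3 : 3 * (T*F)^2 ≤ (2*N)^2 := by
    have h4a : (3/4) * (T^2*F^2) ≤ α^2 * (T^2*F^2) :=
      mul_le_mul_of_nonneg_right hα34 (by positivity)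
    have h4b : α^2 * (T^2*F^2) = β^2 * F^2 := by linear_combination F^2 * hT2
    nlinarith only [h4a, h4b, hβF]
  have hs3 : (Real.sqrt 3)^2 = 3 := Real.sq_sqrt (by norm_num)
  have hs3pos : 0 < Real.sqrt 3 := Real.sqrt_pos.2 (by norm_num)
  have h5 : Real.sqrt 3 * (T * F) ≤ 2 * N := by
    have h3' : (Real.sqrt 3 * (T * F))^2 ≤ (2*N)^2 := by
      rw [mul_pow, hs3]; linarith only [h3]
    have h := Real.sqrt_le_sqrt h3'
    rwa [Real.sqrt_sq (by positivity), Real.sqrt_sq (by positivity)] at h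
  rw [abs_of_nonneg hT0, div_mul_eq_mul_div, div_div, le_div_iff₀ (by positivity)]
  nlinarith only [h5]
end

section
/- Let φ : ℝ² → ℝ² be C² with ‖D²φ‖ uniformly bounded by C on a set containing the orbit of z. Suppose there are constants K ≥ 1 and λ_u > 1 such that ‖Dφ^j_z‖ ≤ K λ_u^j and ‖Dφ^{k−j−1}_{φ^{j+1}(z)}‖·‖Dφ^j_z‖ ≤ K‖Dφ^k_z‖ and ∑_{j=0}^{k−1}‖Dφ^j_z‖ ≤ K‖Dφ^k_z‖ for all 0 ≤ j < k. Then ‖D²φ^k_z‖ ≤ K' ‖Dφ^k_z‖² for a constant K' depending only on K, C. -/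
/-!
Differentiating `D(φ^k)_z = Dφ_{φ^{k-1} z} ∘ ⋯ ∘ Dφ_z` once more by the product rule gives
`D²(φ^k)_z (x, v) = ∑_{j<k} D(φ^{k-j-1})_{φ^{j+1} z} (D²φ_{φ^j z} (Dφ^j_z x, Dφ^j_z v))`.
Bounding the `j`-th term by `C ‖Dφ^{k-j-1}_{φ^{j+1} z}‖ ‖Dφ^j_z‖ · ‖Dφ^j_z‖ ≤ C K ‖Dφ^k_z‖ ‖Dφ^j_z‖`
and summing over `j` with `∑_{j<k} ‖Dφ^j_z‖ ≤ K ‖Dφ^k_z‖` gives `K' = C K² + 1`.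
-/

open Finset Function

section SecondDerivative

variable {𝕜 : Type*} [NontriviallyNormedField 𝕜]
  {E : Type*} [NormedAddCommGroup E] [NormedSpace 𝕜 E]
  {F : Type*} [NormedAddCommGroup F] [NormedSpace 𝕜 F]
  {G : Type*} [NormedAddCommGroup G] [NormedSpace 𝕜 G]

theorem ContDiff.iterate {n : WithTop ℕ∞} {f : E → E} (hf : ContDiff 𝕜 n f) (m : ℕ) :
    ContDiff 𝕜 n f^[m] := by
  induction m with
  | zero => exact contDiff_id
  | succ m ih => rw [iterate_succ']; exact hf.comp ih

theorem fderiv_iterate_succ' {f : E → E} (hf : Differentiable 𝕜 f) (m : ℕ) (w : E) :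
    fderiv 𝕜 f^[m + 1] w = (fderiv 𝕜 f (f^[m] w)).comp (fderiv 𝕜 f^[m] w) := by
  rw [iterate_succ']
  exact fderiv_comp w (hf _) (hf.iterate m w)

theorem fderiv_fderiv_comp_apply {g : F → G} {h : E → F} (hg : ContDiff 𝕜 2 g)
    (hh : ContDiff 𝕜 2 h) (z x v : E) :
    fderiv 𝕜 (fderiv 𝕜 (g ∘ h)) z x v =
      fderiv 𝕜 g (h z) (fderiv 𝕜 (fderiv 𝕜 h) z x v) +
        fderiv 𝕜 (fderiv 𝕜 g) (h z) (fderiv 𝕜 h z x) (fderiv 𝕜 h z v) := by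
  have hg' : Differentiable 𝕜 (fderiv 𝕜 g) :=
    (hg.fderiv_right (m := 1) le_rfl).differentiable one_ne_zero
  have hh' : Differentiable 𝕜 (fderiv 𝕜 h) :=
    (hh.fderiv_right (m := 1) le_rfl).differentiable one_ne_zero
  have hh1 : Differentiable 𝕜 h := hh.differentiable two_ne_zero
  have chain : fderiv 𝕜 (g ∘ h) = fun y ↦ (fderiv 𝕜 g (h y)).comp (fderiv 𝕜 h y) :=
    funext fun y ↦ fderiv_comp y (hg.differentiable two_ne_zero _) (hh1 y)
  rw [chain, fderiv_clm_comp (c := fun y ↦ fderiv 𝕜 g (h y)) ((hg' _).comp z (hh1 z)) (hh' z),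
    fderiv_fun_comp z (hg' _) (hh1 z)]
  simp [add_comm]

theorem fderiv_fderiv_iterate_apply {f : E → E} (hf : ContDiff 𝕜 2 f) (z x v : E) (k : ℕ) :
    fderiv 𝕜 (fderiv 𝕜 f^[k]) z x v =
      ∑ j ∈ range k, fderiv 𝕜 f^[k - j - 1] (f^[j + 1] z)
        (fderiv 𝕜 (fderiv 𝕜 f) (f^[j] z) (fderiv 𝕜 f^[j] z x) (fderiv 𝕜 f^[j] z v)) := by
  have hf1 : Differentiable 𝕜 f := hf.differentiable two_ne_zero
  induction k with
  | zero =>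
    have hid : fderiv 𝕜 (id : E → E) = fun _ ↦ .id 𝕜 E := funext fun _ ↦ fderiv_id
    simp [hid]
  | succ k ih =>
    have last : k + 1 - k - 1 = 0 := by omega
    rw [iterate_succ', fderiv_fderiv_comp_apply hf (hf.iterate k), ih, map_sum, sum_range_succ,
      last, iterate_zero, fderiv_id, ContinuousLinearMap.id_apply]
    congr 1
    refine sum_congr rfl fun j hj ↦ ?_
    have hjk : j < k := mem_range.mp hj
    have index : k + 1 - j - 1 = (k - j - 1) + 1 := by omega
    have orbit : f^[k - j - 1] (f^[j + 1] z) = f^[k] z := by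
      rw [← iterate_add_apply]; congr 1; omega
    rw [index, fderiv_iterate_succ' hf1, orbit, ContinuousLinearMap.comp_apply]

theorem norm_fderiv_fderiv_iterate_le {f : E → E} (hf : ContDiff 𝕜 2 f) (z : E) (k : ℕ) :
    ‖fderiv 𝕜 (fderiv 𝕜 f^[k]) z‖ ≤
      ∑ j ∈ range k, ‖fderiv 𝕜 f^[k - j - 1] (f^[j + 1] z)‖ *
        ‖fderiv 𝕜 (fderiv 𝕜 f) (f^[j] z)‖ * ‖fderiv 𝕜 f^[j] z‖ ^ 2 := by
  refine ContinuousLinearMap.opNorm_le_bound₂ _ (by positivity) fun x v ↦ ?_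
  rw [fderiv_fderiv_iterate_apply hf, sum_mul, sum_mul]
  refine (norm_sum_le _ _).trans (sum_le_sum fun j _ ↦ ?_)
  set A := fderiv 𝕜 f^[k - j - 1] (f^[j + 1] z)
  set B := fderiv 𝕜 (fderiv 𝕜 f) (f^[j] z)
  set P := fderiv 𝕜 f^[j] z
  calc ‖A (B (P x) (P v))‖ ≤ ‖A‖ * (‖B‖ * ‖P x‖ * ‖P v‖) :=
        (A.le_opNorm _).trans (by gcongr; exact B.le_opNorm₂ _ _)
    _ ≤ ‖A‖ * (‖B‖ * (‖P‖ * ‖x‖) * (‖P‖ * ‖v‖)) := by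
        gcongr <;> exact P.le_opNorm _
    _ = ‖A‖ * ‖B‖ * ‖P‖ ^ 2 * ‖x‖ * ‖v‖ := by ring

end SecondDerivative

theorem stmt10_general (K C : ℝ) (hC : 0 ≤ C) :
    ∃ K' > 0, ∀ (lamu : ℝ), 1 < lamu →
      ∀ (φ : EuclideanSpace ℝ (Fin 2) → EuclideanSpace ℝ (Fin 2))
        (z : EuclideanSpace ℝ (Fin 2)) (k : ℕ),
      ContDiff ℝ 2 φ →
      (∀ n : ℕ, ‖fderiv ℝ (fderiv ℝ φ) (φ^[n] z)‖ ≤ C) →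
      (∀ j : ℕ, ‖fderiv ℝ (φ^[j]) z‖ ≤ K * lamu ^ j) →
      (∀ j < k, ‖fderiv ℝ (φ^[k - j - 1]) (φ^[j + 1] z)‖ * ‖fderiv ℝ (φ^[j]) z‖
          ≤ K * ‖fderiv ℝ (φ^[k]) z‖) →
      (∑ j ∈ Finset.range k, ‖fderiv ℝ (φ^[j]) z‖ ≤ K * ‖fderiv ℝ (φ^[k]) z‖) →
      ‖fderiv ℝ (fderiv ℝ (φ^[k])) z‖ ≤ K' * ‖fderiv ℝ (φ^[k]) z‖ ^ 2 := by
  refine ⟨C * K ^ 2 + 1, by positivity, fun lamu _ φ z k hφ hD2 _ hprod hsum ↦ ?_⟩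
  set N := ‖fderiv ℝ (φ^[k]) z‖
  have hKN : 0 ≤ K * N := (sum_nonneg fun j _ ↦ norm_nonneg _).trans hsum
  have hterm : ∀ j ∈ range k, ‖fderiv ℝ φ^[k - j - 1] (φ^[j + 1] z)‖ *
      ‖fderiv ℝ (fderiv ℝ φ) (φ^[j] z)‖ * ‖fderiv ℝ φ^[j] z‖ ^ 2 ≤
        C * (K * N) * ‖fderiv ℝ φ^[j] z‖ := fun j hj ↦ by
    calc _ ≤ ‖fderiv ℝ φ^[k - j - 1] (φ^[j + 1] z)‖ * C * ‖fderiv ℝ φ^[j] z‖ ^ 2 := by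
          gcongr; exact hD2 j
      _ = C * (‖fderiv ℝ φ^[k - j - 1] (φ^[j + 1] z)‖ * ‖fderiv ℝ φ^[j] z‖) *
            ‖fderiv ℝ φ^[j] z‖ := by ring
      _ ≤ C * (K * N) * ‖fderiv ℝ φ^[j] z‖ := by
          gcongr C * ?_ * _; exact hprod j (mem_range.mp hj)
  calc ‖fderiv ℝ (fderiv ℝ φ^[k]) z‖ ≤ ∑ j ∈ range k, C * (K * N) * ‖fderiv ℝ φ^[j] z‖ :=
        (norm_fderiv_fderiv_iterate_le hφ z k).trans (sum_le_sum hterm)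
    _ ≤ C * (K * N) * (K * N) := by rw [← mul_sum]; gcongr
    _ ≤ (C * K ^ 2 + 1) * N ^ 2 := by nlinarith [sq_nonneg N]

/-- Let `φ : ℝ² → ℝ²` be `C²` with second derivative bounded
by `C` along the orbit of `z`.  If for some `K ≥ 1` and `λᵤ > 1` we have
`‖Dφ^j_z‖ ≤ K λᵤ^j`, `‖Dφ^{k−j−1}_{φ^{j+1}z}‖·‖Dφ^j_z‖ ≤ K ‖Dφ^k_z‖` for all
`0 ≤ j < k` and `∑_{j<k} ‖Dφ^j_z‖ ≤ K ‖Dφ^k_z‖`, then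
`‖D²φ^k_z‖ ≤ K' ‖Dφ^k_z‖²` with `K'` depending only on `K` and `C`. -/
theorem stmt10 (K C : ℝ) (hK : 1 ≤ K) (hC : 0 ≤ C) :
    ∃ K' > 0, ∀ (lamu : ℝ), 1 < lamu →
      ∀ (φ : EuclideanSpace ℝ (Fin 2) → EuclideanSpace ℝ (Fin 2))
        (z : EuclideanSpace ℝ (Fin 2)) (k : ℕ),
      ContDiff ℝ 2 φ →
      (∀ n : ℕ, ‖fderiv ℝ (fderiv ℝ φ) (φ^[n] z)‖ ≤ C) →
      (∀ j : ℕ, ‖fderiv ℝ (φ^[j]) z‖ ≤ K * lamu ^ j) →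
      (∀ j < k, ‖fderiv ℝ (φ^[k - j - 1]) (φ^[j + 1] z)‖ * ‖fderiv ℝ (φ^[j]) z‖
          ≤ K * ‖fderiv ℝ (φ^[k]) z‖) →
      (∑ j ∈ Finset.range k, ‖fderiv ℝ (φ^[j]) z‖ ≤ K * ‖fderiv ℝ (φ^[k]) z‖) →
      ‖fderiv ℝ (fderiv ℝ (φ^[k])) z‖ ≤ K' * ‖fderiv ℝ (φ^[k]) z‖ ^ 2 :=
  stmt10_general K C hC
end

section
/- Let γ : [t₁, t₂] → ℝ² be a C¹ curve parametrized by arclength and A an invertible 2×2 matrix with singular values E ≤ F. Suppose the tangent vector γ'(t) satisfies ‖γ'(t) − e‖ ≤ ε for all t, where e is the most contracted unit vector of A. Then the length of the image curve A∘γ satisfies length(A∘γ) ≤ (E + Fε)(t₂ − t₁). -/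
/-- Let `γ : [t₁,t₂] → ℝ²` be a `C¹` curve parametrized by
arclength (`γ' = g`, `‖g t‖ = 1`) and `A` an invertible 2×2 matrix with
singular values `E ≤ F` (`E = ‖A⁻¹‖⁻¹`, `F = ‖A‖`) and most contracted unit
vector `e`.  If `‖g t − e‖ ≤ ε` for all `t ∈ [t₁,t₂]`, then the length of the
image curve satisfies `∫_{t₁}^{t₂} ‖A γ'(t)‖ dt ≤ (E + F ε)(t₂ − t₁)`. -/
theorem stmt18 (A : Matrix (Fin 2) (Fin 2) ℝ) (hA : IsUnit A.det)
    (T : EuclideanSpace ℝ (Fin 2) →L[ℝ] EuclideanSpace ℝ (Fin 2))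
    (hT : T = Matrix.toEuclideanCLM (𝕜 := ℝ) A)
    (E F : ℝ) (hE : E = ‖Matrix.toEuclideanCLM (𝕜 := ℝ) A⁻¹‖⁻¹) (hF : F = ‖T‖)
    (hEF : E ≤ F)
    (e : EuclideanSpace ℝ (Fin 2)) (he : ‖e‖ = 1) (hemin : ‖T e‖ = E)
    (t₁ t₂ ε : ℝ) (ht : t₁ ≤ t₂) (hε : 0 ≤ ε)
    (γ g : ℝ → EuclideanSpace ℝ (Fin 2))
    (hγ : ∀ t ∈ Set.Icc t₁ t₂, HasDerivAt γ (g t) t)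
    (hunit : ∀ t ∈ Set.Icc t₁ t₂, ‖g t‖ = 1)
    (hclose : ∀ t ∈ Set.Icc t₁ t₂, ‖g t - e‖ ≤ ε) :
    ∫ t in t₁..t₂, ‖T (g t)‖ ≤ (E + F * ε) * (t₂ - t₁) := by
  have hEnn : 0 ≤ E := hemin ▸ norm_nonneg _
  have hFnn : 0 ≤ F := hF ▸ norm_nonneg _
  have hptw : ∀ t ∈ Set.Icc t₁ t₂, ‖T (g t)‖ ≤ E + F * ε := by
    intro t htmem
    have h1 : T (g t) = T e + T (g t - e) := by
      rw [map_sub]; abel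
    calc ‖T (g t)‖ = ‖T e + T (g t - e)‖ := by rw [h1]
      _ ≤ ‖T e‖ + ‖T (g t - e)‖ := norm_add_le _ _
      _ ≤ E + F * ε := by
          gcongr
          · exact le_of_eq hemin
          · calc ‖T (g t - e)‖ ≤ ‖T‖ * ‖g t - e‖ := T.le_opNorm _
              _ ≤ F * ε := by rw [hF]; gcongr; exact hclose t htmem
  by_cases hint : IntervalIntegrable (fun t => ‖T (g t)‖) MeasureTheory.volume t₁ t₂
  · calc ∫ t in t₁..t₂, ‖T (g t)‖ ≤ ∫ _t in t₁..t₂, (E + F * ε) :=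
          intervalIntegral.integral_mono_on ht hint intervalIntegrable_const hptw
      _ = (E + F * ε) * (t₂ - t₁) := by
          rw [intervalIntegral.integral_const, smul_eq_mul, mul_comm]
  · rw [intervalIntegral.integral_undef hint]
    have : 0 ≤ E + F * ε := by positivity
    exact mul_nonneg this (by linarith)
end
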